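/- arXiv:2404.18969 — 2 statements merged into one kernel-verified Lean document; each statement's English description precedes it below -/
import Mathlib

section
/- For integers s >= 2, t >= 2 and q >= 1, the spread (largest eigenvalue minus smallest eigenvalue of the adjacency matrix) of the graph (s-1)K_1 ∨ qK_t equals sqrt((t-1)^2 + 4(s-1)qt). -/
/-- The join of two simple graphs: all edges between the two vertex sets are added. -/
def graphJoin {α β : Type*} (G : SimpleGraph α) (H : SimpleGraph β) :
    SimpleGraph (α ⊕ β) where
  Adj x y :=
    match x, y with
    | Sum.inl a, Sum.inl b => G.Adj a b
    | Sum.inr a, Sum.inr b => H.Adj a b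
    | Sum.inl _, Sum.inr _ => True
    | Sum.inr _, Sum.inl _ => True
  symm := by
    refine ⟨?_⟩
    rintro (a | a) (b | b) h
    · exact G.adj_symm h
    · trivial
    · trivial
    · exact H.adj_symm h
  loopless := by
    refine ⟨?_⟩
    rintro (a | a) h
    · exact G.irrefl h
    · exact H.irrefl h

instance graphJoin.decidableRel {α β : Type*} (G : SimpleGraph α) (H : SimpleGraph β)
    [dG : DecidableRel G.Adj] [dH : DecidableRel H.Adj] :
    DecidableRel (graphJoin G H).Adj := fun x y =>
  match x, y with
  | Sum.inl a, Sum.inl b => dG a b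
  | Sum.inr a, Sum.inr b => dH a b
  | Sum.inl _, Sum.inr _ => Decidable.isTrue trivial
  | Sum.inr _, Sum.inl _ => Decidable.isTrue trivial

/-- The disjoint union `q K_t` of `q` copies of the complete graph `K_t`, on vertex set
`Fin q × Fin t`: two vertices are adjacent iff they are distinct and lie in the same copy. -/
def cliquesUnion (q t : ℕ) : SimpleGraph (Fin q × Fin t) where
  Adj x y := x.1 = y.1 ∧ x ≠ y
  symm := ⟨fun x y h => ⟨h.1.symm, h.2.symm⟩⟩
  loopless := ⟨fun x h => h.2 rfl⟩

instance cliquesUnion.decidableRel (q t : ℕ) : DecidableRel (cliquesUnion q t).Adj :=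
  fun _ _ => instDecidableAnd

namespace SpreadAux

open Matrix

/-! ### Pure arithmetic lemmas -/

lemma qf_upper (m q t P S T X Y r : ℝ) (hP : 0 ≤ P) (hS : 0 ≤ S) (hT : 0 ≤ T)
    (hX : X^2 ≤ m*P) (hY : Y^2 ≤ q*T) (hTS : T ≤ t*S)
    (hr : r^2 = (t-1)*r + m*q*t) (hrt : t ≤ r)
    (ht : 2 ≤ t) (hq : 1 ≤ q) (hm : 1 ≤ m) :
    2*X*Y + T - S ≤ r*(P+S) := by
  have hq0 : (0:ℝ) < q := by linarith
  have ht0 : (0:ℝ) < t := by linarith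
  have hr0 : (0:ℝ) < r := by linarith
  have hc1 : (1:ℝ) ≤ r - (t-1) := by linarith
  have key : (r-(t-1))*q*t*(r*(P+S)) - (r-(t-1))*q*t*(2*X*Y + T - S) =
      (q*t*X - (r-(t-1))*Y)^2 + (q*t)^2*(m*P - X^2) + (r-(t-1))^2*(q*T - Y^2)
        + (r-(t-1))*q*(1+r)*(t*S - T) := by
    linear_combination (q*t*P) * hr
  have h1 : 0 ≤ (r-(t-1))*q*t*(r*(P+S)) - (r-(t-1))*q*t*(2*X*Y + T - S) := by
    rw [key]
    have h2 := sq_nonneg (q*t*X - (r-(t-1))*Y)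
    have h3 : 0 ≤ (q*t)^2*(m*P - X^2) := by nlinarith [sq_nonneg (q*t)]
    have h4 : 0 ≤ (r-(t-1))^2*(q*T - Y^2) := by nlinarith [sq_nonneg (r-(t-1))]
    have h5 : 0 ≤ (r-(t-1))*q*(1+r)*(t*S - T) := by
      have h6 : 0 ≤ r - (t-1) := by linarith
      have h7 : 0 ≤ t*S - T := by linarith
      have h8 : 0 ≤ 1 + r := by linarith
      positivity
    linarith
  nlinarith [mul_pos (mul_pos (by linarith : (0:ℝ) < r - (t-1)) hq0) ht0]

lemma qf_lower (m q t P S T X Y r : ℝ) (hP : 0 ≤ P) (hS : 0 ≤ S) (hT : 0 ≤ T)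
    (hX : X^2 ≤ m*P) (hY : Y^2 ≤ q*T) (hTS : T ≤ t*S)
    (hr : r^2 = (t-1)*r + m*q*t) (hrt : t ≤ r)
    (ht : 2 ≤ t) (hq : 1 ≤ q) (hm : 1 ≤ m) :
    (t-1-r)*(P+S) ≤ 2*X*Y + T - S := by
  have hq0 : (0:ℝ) < q := by linarith
  have ht0 : (0:ℝ) < t := by linarith
  have hr0 : (0:ℝ) < r := by linarith
  have key : q*t*r*(2*X*Y + T - S) - q*t*r*((t-1-r)*(P+S)) =
      (q*t*X + r*Y)^2 + (q*t)^2*(m*P - X^2) + r^2*(q*T - Y^2) + q*r*(r-t)*(t*S - T) := by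
    linear_combination (q*t*P) * hr
  have h1 : 0 ≤ q*t*r*(2*X*Y + T - S) - q*t*r*((t-1-r)*(P+S)) := by
    rw [key]
    have h2 := sq_nonneg (q*t*X + r*Y)
    have h3 : 0 ≤ (q*t)^2*(m*P - X^2) := by nlinarith [sq_nonneg (q*t)]
    have h4 : 0 ≤ r^2*(q*T - Y^2) := by nlinarith [sq_nonneg r]
    have h5 : 0 ≤ q*r*(r-t)*(t*S - T) := by
      have : 0 ≤ r - t := by linarith
      have : 0 ≤ t*S - T := by linarith
      positivity
    linarith
  nlinarith [mul_pos (mul_pos hq0 ht0) hr0]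

/-! ### Matrix entries -/

lemma entry_ll (n q t : ℕ) (i i' : Fin n) :
    ((graphJoin (⊥ : SimpleGraph (Fin n)) (cliquesUnion q t)).adjMatrix ℝ)
      (Sum.inl i) (Sum.inl i') = 0 := by
  rw [SimpleGraph.adjMatrix_apply]
  simp [graphJoin]

lemma entry_lr (n q t : ℕ) (i : Fin n) (p : Fin q × Fin t) :
    ((graphJoin (⊥ : SimpleGraph (Fin n)) (cliquesUnion q t)).adjMatrix ℝ)
      (Sum.inl i) (Sum.inr p) = 1 := by
  rw [SimpleGraph.adjMatrix_apply]
  simp [graphJoin]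

lemma entry_rl (n q t : ℕ) (i : Fin n) (p : Fin q × Fin t) :
    ((graphJoin (⊥ : SimpleGraph (Fin n)) (cliquesUnion q t)).adjMatrix ℝ)
      (Sum.inr p) (Sum.inl i) = 1 := by
  rw [SimpleGraph.adjMatrix_apply]
  simp [graphJoin]

lemma entry_rr (n q t : ℕ) (p p' : Fin q × Fin t) :
    ((graphJoin (⊥ : SimpleGraph (Fin n)) (cliquesUnion q t)).adjMatrix ℝ)
      (Sum.inr p) (Sum.inr p') =
      (if p.1 = p'.1 then (1:ℝ) else 0) - (if p = p' then (1:ℝ) else 0) := by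
  have hadj : (graphJoin (⊥ : SimpleGraph (Fin n)) (cliquesUnion q t)).Adj
      (Sum.inr p) (Sum.inr p') ↔ (p.1 = p'.1 ∧ p ≠ p') := Iff.rfl
  rw [SimpleGraph.adjMatrix_apply]
  by_cases h1 : p = p'
  · subst h1; simp [hadj]
  · by_cases h2 : p.1 = p'.1 <;> simp [hadj, h1, h2]

/-! ### Sum helpers -/

lemma sum_if_fst (q t : ℕ) (j : Fin q) (f : Fin q × Fin t → ℝ) :
    (∑ p' : Fin q × Fin t, (if j = p'.1 then f p' else 0)) = ∑ k, f (j, k) := by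
  rw [Fintype.sum_prod_type]
  rw [show (fun x : Fin q => ∑ y : Fin t, if j = x then f (x, y) else 0)
      = fun x : Fin q => if j = x then (∑ y : Fin t, f (x, y)) else 0 from
    funext fun x => by by_cases h : j = x <;> simp [h]]
  simp

lemma sum_if_eq (q t : ℕ) (p : Fin q × Fin t) (f : Fin q × Fin t → ℝ) :
    (∑ p' : Fin q × Fin t, (if p = p' then f p' else 0)) = f p := by
  simp

/-! ### Spectrum characterization -/

lemma matrix_mem_spectrum_iff {n : Type*} [Fintype n] [DecidableEq n]
    (A : Matrix n n ℝ) (μ : ℝ) :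
    μ ∈ spectrum ℝ A ↔ ∃ v, v ≠ 0 ∧ A.mulVec v = μ • v := by
  rw [spectrum.mem_iff, Matrix.isUnit_iff_isUnit_det, isUnit_iff_ne_zero, not_not,
    ← Matrix.exists_mulVec_eq_zero_iff]
  constructor
  · rintro ⟨v, hv, h⟩
    refine ⟨v, hv, ?_⟩
    have : (algebraMap ℝ (Matrix n n ℝ) μ - A).mulVec v = μ • v - A.mulVec v := by
      rw [Matrix.sub_mulVec, Algebra.algebraMap_eq_smul_one, Matrix.smul_mulVec,
        Matrix.one_mulVec]
    rw [this] at h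
    exact (sub_eq_zero.mp h).symm
  · rintro ⟨v, hv, h⟩
    refine ⟨v, hv, ?_⟩
    rw [Matrix.sub_mulVec, Algebra.algebraMap_eq_smul_one, Matrix.smul_mulVec,
      Matrix.one_mulVec, h, sub_self]

lemma dot_mulVec_expand {n : Type*} [Fintype n] (A : Matrix n n ℝ) (v : n → ℝ) :
    v ⬝ᵥ A.mulVec v = ∑ x, ∑ y, v x * (A x y * v y) := by
  simp [dotProduct, Matrix.mulVec, Finset.mul_sum]

/-! ### The quadratic form of the join graph -/

lemma quad_form (n q t : ℕ) (v : Fin n ⊕ Fin q × Fin t → ℝ) :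
    v ⬝ᵥ (((graphJoin (⊥ : SimpleGraph (Fin n)) (cliquesUnion q t)).adjMatrix ℝ).mulVec v)
      = 2 * (∑ i, v (Sum.inl i)) * (∑ p : Fin q × Fin t, v (Sum.inr p))
        + (∑ j : Fin q, (∑ k : Fin t, v (Sum.inr (j, k))) ^ 2)
        - ∑ p : Fin q × Fin t, v (Sum.inr p) ^ 2 := by
  set A := ((graphJoin (⊥ : SimpleGraph (Fin n)) (cliquesUnion q t)).adjMatrix ℝ) with hA
  rw [dot_mulVec_expand, Fintype.sum_sum_type]
  have e1 : ∀ i : Fin n, (∑ y, v (Sum.inl i) * (A (Sum.inl i) y * v y))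
      = v (Sum.inl i) * ∑ p : Fin q × Fin t, v (Sum.inr p) := by
    intro i
    rw [Fintype.sum_sum_type]
    simp only [hA, entry_ll, entry_lr, zero_mul, mul_zero, one_mul, Finset.sum_const_zero,
      zero_add, Finset.mul_sum]
  have e2 : ∀ p : Fin q × Fin t, (∑ y, v (Sum.inr p) * (A (Sum.inr p) y * v y))
      = v (Sum.inr p) * (∑ i, v (Sum.inl i))
        + (v (Sum.inr p) * ∑ k, v (Sum.inr (p.1, k)) - v (Sum.inr p) ^ 2) := by
    intro p
    rw [Fintype.sum_sum_type]
    congr 1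
    · simp only [hA, entry_rl, one_mul, Finset.mul_sum]
    · have e3 : ∀ p' : Fin q × Fin t, v (Sum.inr p) * (A (Sum.inr p) (Sum.inr p') * v (Sum.inr p'))
          = (if p.1 = p'.1 then v (Sum.inr p) * v (Sum.inr p') else 0)
            - (if p = p' then v (Sum.inr p) * v (Sum.inr p') else 0) := by
        intro p'
        rw [hA, entry_rr]
        by_cases h1 : p = p'
        · subst h1; simp
        · by_cases h2 : p.1 = p'.1 <;> simp [h1, h2]
      rw [Finset.sum_congr rfl fun p' _ => e3 p', Finset.sum_sub_distrib,
        sum_if_fst q t p.1 (fun p' => v (Sum.inr p) * v (Sum.inr p')),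
        sum_if_eq q t p (fun p' => v (Sum.inr p) * v (Sum.inr p')),
        ← Finset.mul_sum]
      ring_nf
  rw [Finset.sum_congr rfl fun i _ => e1 i, Finset.sum_congr rfl fun p _ => e2 p,
    ← Finset.sum_mul, Finset.sum_add_distrib, Finset.sum_sub_distrib, ← Finset.sum_mul]
  have e4 : (∑ p : Fin q × Fin t, v (Sum.inr p) * ∑ k, v (Sum.inr (p.1, k)))
      = ∑ j : Fin q, (∑ k, v (Sum.inr (j, k))) ^ 2 := by
    rw [Fintype.sum_prod_type]
    congr 1
    ext j
    have h5 : ∀ y : Fin t, (∑ k, v (Sum.inr ((j, y).1, k))) = ∑ k, v (Sum.inr (j, k)) :=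
      fun _ => rfl
    rw [Finset.sum_congr rfl fun y _ => by rw [h5 y], ← Finset.sum_mul]
    ring
  rw [e4]
  ring


/-! ### Eigenvalues -/

lemma eigen_mem (n q t : ℕ) (μ : ℝ) (hμ : μ^2 = ((t:ℝ)-1)*μ + (n:ℝ)*(q:ℝ)*(t:ℝ))
    (hn : 1 ≤ n) (hq : 1 ≤ q) (ht : 1 ≤ t) :
    μ ∈ spectrum ℝ ((graphJoin (⊥ : SimpleGraph (Fin n)) (cliquesUnion q t)).adjMatrix ℝ) := by
  set A := ((graphJoin (⊥ : SimpleGraph (Fin n)) (cliquesUnion q t)).adjMatrix ℝ) with hA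
  rw [matrix_mem_spectrum_iff]
  refine ⟨Sum.elim (fun _ => ((q:ℝ)*(t:ℝ))) (fun _ => μ), ?_, ?_⟩
  · intro h
    have h0 := congrFun h (Sum.inl ⟨0, hn⟩)
    simp only [Sum.elim_inl, Pi.zero_apply] at h0
    have hq0 : (0:ℝ) < (q:ℝ) := by exact_mod_cast hq
    have ht0 : (0:ℝ) < (t:ℝ) := by exact_mod_cast ht
    nlinarith
  · funext x
    have hexp : ∀ x, A.mulVec (Sum.elim (fun _ => ((q:ℝ)*(t:ℝ))) (fun _ => μ)) x
        = ∑ y, A x y * (Sum.elim (fun _ => ((q:ℝ)*(t:ℝ))) (fun _ => μ)) y := by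
      intro x; simp [Matrix.mulVec, dotProduct]
    rw [hexp]
    cases x with
    | inl i =>
      rw [Fintype.sum_sum_type]
      simp only [Sum.elim_inl, Sum.elim_inr, hA, entry_ll, entry_lr, zero_mul, one_mul,
        Finset.sum_const_zero, zero_add, Finset.sum_const, Finset.card_univ, Fintype.card_prod,
        Fintype.card_fin, nsmul_eq_mul, Pi.smul_apply, smul_eq_mul]
      push_cast
      ring
    | inr p =>
      rw [Fintype.sum_sum_type]
      have hsum2 : (∑ p' : Fin q × Fin t, A (Sum.inr p) (Sum.inr p') * μ)
          = ((t:ℝ) - 1) * μ := by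
        have e3 : ∀ p' : Fin q × Fin t, A (Sum.inr p) (Sum.inr p') * μ
            = (if p.1 = p'.1 then μ else 0) - (if p = p' then μ else 0) := by
          intro p'
          rw [hA, entry_rr]
          by_cases h1 : p = p'
          · subst h1; simp
          · by_cases h2 : p.1 = p'.1 <;> simp [h1, h2]
        rw [Finset.sum_congr rfl fun p' _ => e3 p', Finset.sum_sub_distrib,
          sum_if_fst q t p.1 (fun _ => μ), sum_if_eq q t p (fun _ => μ)]
        simp [Finset.sum_const]
        ring
      simp only [Sum.elim_inl, Sum.elim_inr, hA, entry_rl, one_mul, Finset.sum_const,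
        Finset.card_univ, Fintype.card_fin, nsmul_eq_mul, Pi.smul_apply, smul_eq_mul]
      rw [hA] at hsum2
      rw [hsum2]
      nlinarith [hμ]


/-! ### Spectrum bounds -/

lemma spectrum_bounds (n q t : ℕ) (μ r : ℝ)
    (hμ : μ ∈ spectrum ℝ
      ((graphJoin (⊥ : SimpleGraph (Fin n)) (cliquesUnion q t)).adjMatrix ℝ))
    (hr : r^2 = ((t:ℝ)-1)*r + (n:ℝ)*(q:ℝ)*(t:ℝ)) (hrt : (t:ℝ) ≤ r)
    (ht : 2 ≤ t) (hq : 1 ≤ q) (hn : 1 ≤ n) :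
    (t:ℝ) - 1 - r ≤ μ ∧ μ ≤ r := by
  set A := ((graphJoin (⊥ : SimpleGraph (Fin n)) (cliquesUnion q t)).adjMatrix ℝ) with hA
  rw [matrix_mem_spectrum_iff] at hμ
  obtain ⟨v, hv, hAv⟩ := hμ
  set X : ℝ := ∑ i, v (Sum.inl i) with hX
  set Y : ℝ := ∑ p : Fin q × Fin t, v (Sum.inr p) with hY
  set P : ℝ := ∑ i, v (Sum.inl i) ^ 2 with hP
  set S : ℝ := ∑ p : Fin q × Fin t, v (Sum.inr p) ^ 2 with hS
  set T : ℝ := ∑ j : Fin q, (∑ k, v (Sum.inr (j, k))) ^ 2 with hT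
  have hvv : v ⬝ᵥ v = P + S := by
    simp only [dotProduct]
    rw [Fintype.sum_sum_type]
    simp only [hP, hS, ← sq]
  have hform : μ * (P + S) = 2 * X * Y + T - S := by
    have h1 : v ⬝ᵥ A.mulVec v = μ * (P + S) := by
      rw [hAv, dotProduct_smul, hvv, smul_eq_mul]
    rw [← h1, quad_form]
  have hP0 : 0 ≤ P := Finset.sum_nonneg fun i _ => sq_nonneg _
  have hS0 : 0 ≤ S := Finset.sum_nonneg fun i _ => sq_nonneg _
  have hT0 : 0 ≤ T := Finset.sum_nonneg fun i _ => sq_nonneg _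
  have hPS : 0 < P + S := by
    rcases lt_or_eq_of_le (by linarith : (0:ℝ) ≤ P + S) with h | h
    · exact h
    · exfalso; apply hv; rw [← dotProduct_self_eq_zero (v := v), hvv]; linarith
  have hXb : X^2 ≤ (n:ℝ) * P := by
    have := sq_sum_le_card_mul_sum_sq (s := (Finset.univ : Finset (Fin n)))
      (f := fun i => v (Sum.inl i))
    simpa [Finset.card_univ] using this
  have hYb : Y^2 ≤ (q:ℝ) * T := by
    have h2 : Y = ∑ j : Fin q, ∑ k, v (Sum.inr (j, k)) := by
      rw [hY, Fintype.sum_prod_type]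
    rw [h2]
    have := sq_sum_le_card_mul_sum_sq (s := (Finset.univ : Finset (Fin q)))
      (f := fun j => ∑ k, v (Sum.inr (j, k)))
    simpa [Finset.card_univ] using this
  have hTSb : T ≤ (t:ℝ) * S := by
    have h3 : S = ∑ j : Fin q, ∑ k, v (Sum.inr (j, k)) ^ 2 := by
      rw [hS, Fintype.sum_prod_type]
    rw [h3, Finset.mul_sum]
    apply Finset.sum_le_sum
    intro j _
    have := sq_sum_le_card_mul_sum_sq (s := (Finset.univ : Finset (Fin t)))
      (f := fun k => v (Sum.inr (j, k)))
    simpa [Finset.card_univ] using this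
  have htR : (2:ℝ) ≤ (t:ℝ) := by exact_mod_cast ht
  have hqR : (1:ℝ) ≤ (q:ℝ) := by exact_mod_cast hq
  have hnR : (1:ℝ) ≤ (n:ℝ) := by exact_mod_cast hn
  constructor
  · have := qf_lower (n:ℝ) (q:ℝ) (t:ℝ) P S T X Y r hP0 hS0 hT0 hXb hYb hTSb hr hrt htR hqR hnR
    rw [← hform] at this
    exact le_of_mul_le_mul_right (by linarith) hPS
  · have := qf_upper (n:ℝ) (q:ℝ) (t:ℝ) P S T X Y r hP0 hS0 hT0 hXb hYb hTSb hr hrt htR hqR hnR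
    rw [← hform] at this
    exact le_of_mul_le_mul_right (by linarith) hPS

end SpreadAux

/-- The spread of `(s-1)K_1 ∨ q K_t` equals `√((t-1)² + 4(s-1)qt)`. -/
theorem spread_join_cliques (s t q : ℕ) (hs : 2 ≤ s) (ht : 2 ≤ t) (hq : 1 ≤ q) :
    let A := (graphJoin (⊥ : SimpleGraph (Fin (s - 1))) (cliquesUnion q t)).adjMatrix ℝ
    sSup (spectrum ℝ A) - sInf (spectrum ℝ A) =
      Real.sqrt (((t : ℝ) - 1) ^ 2 + 4 * ((s : ℝ) - 1) * (q : ℝ) * (t : ℝ)) := by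
  intro A
  have hn : 1 ≤ s - 1 := by omega
  have hmcast : (((s - 1 : ℕ)) : ℝ) = (s : ℝ) - 1 := by
    have : (1:ℕ) ≤ s := by omega
    push_cast [Nat.cast_sub this]
    ring
  set D : ℝ := ((t:ℝ)-1)^2 + 4*(((s-1:ℕ)):ℝ)*(q:ℝ)*(t:ℝ) with hD
  have hD0 : (0:ℝ) ≤ D := by positivity
  set r : ℝ := (((t:ℝ)-1) + Real.sqrt D)/2 with hrdef
  have hsq : Real.sqrt D ^ 2 = D := Real.sq_sqrt hD0
  have hr : r^2 = ((t:ℝ)-1)*r + (((s-1:ℕ)):ℝ)*(q:ℝ)*(t:ℝ) := by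
    rw [hrdef]; rw [hD] at hsq; linear_combination (1/4) * hsq
  have htR : (2:ℝ) ≤ (t:ℝ) := by exact_mod_cast ht
  have hqR : (1:ℝ) ≤ (q:ℝ) := by exact_mod_cast hq
  have hnR : (1:ℝ) ≤ (((s-1:ℕ)):ℝ) := by exact_mod_cast hn
  have hrt : (t:ℝ) ≤ r := by
    have hle : ((t:ℝ)+1) ≤ Real.sqrt D := by
      rw [show ((t:ℝ)+1) = Real.sqrt (((t:ℝ)+1)^2) from
        (Real.sqrt_sq (by positivity)).symm]
      apply Real.sqrt_le_sqrt
      rw [hD]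
      have hmq : (1:ℝ) ≤ (((s-1:ℕ)):ℝ) * (q:ℝ) := by nlinarith
      nlinarith [mul_le_mul_of_nonneg_left hmq (by linarith : (0:ℝ) ≤ 4*(t:ℝ))]
    rw [hrdef]; linarith
  have hmem_r : r ∈ spectrum ℝ A :=
    SpreadAux.eigen_mem (s-1) q t r hr hn hq (by omega)
  have hmem_l : (t:ℝ) - 1 - r ∈ spectrum ℝ A :=
    SpreadAux.eigen_mem (s-1) q t ((t:ℝ)-1-r) (by linear_combination hr) hn hq (by omega)
  have hub : ∀ μ ∈ spectrum ℝ A, μ ≤ r := fun μ hμ =>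
    (SpreadAux.spectrum_bounds (s-1) q t μ r hμ hr hrt ht hq hn).2
  have hlb : ∀ μ ∈ spectrum ℝ A, (t:ℝ) - 1 - r ≤ μ := fun μ hμ =>
    (SpreadAux.spectrum_bounds (s-1) q t μ r hμ hr hrt ht hq hn).1
  have hSup : sSup (spectrum ℝ A) = r :=
    le_antisymm (csSup_le ⟨r, hmem_r⟩ hub) (le_csSup ⟨r, hub⟩ hmem_r)
  have hInf : sInf (spectrum ℝ A) = (t:ℝ) - 1 - r :=
    le_antisymm (csInf_le ⟨(t:ℝ)-1-r, hlb⟩ hmem_l) (le_csInf ⟨r, hmem_r⟩ hlb)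
  rw [hSup, hInf]
  have : r - ((t:ℝ)-1-r) = Real.sqrt D := by rw [hrdef]; ring
  rw [this, hD, hmcast]
end

section
/- For integers s >= 2, t >= 2 and q >= 1, the largest eigenvalue of the adjacency matrix of (s-1)K_1 ∨ qK_t is (t-1 + sqrt((t-1)^2 + 4(s-1)qt))/2 and the smallest eigenvalue is (t-1 - sqrt((t-1)^2 + 4(s-1)qt))/2. -/
open Finset

theorem mem_spec {n : Type*} [Fintype n] [DecidableEq n] (A : Matrix n n ℝ) (μ : ℝ) :
    μ ∈ spectrum ℝ A ↔ ∃ v ≠ 0, A.mulVec v = μ • v := by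
  rw [spectrum.mem_iff, Matrix.isUnit_iff_isUnit_det, isUnit_iff_ne_zero, not_not,
    ← Matrix.exists_mulVec_eq_zero_iff]
  refine exists_congr fun v => and_congr_right fun hv => ?_
  have : ((algebraMap ℝ (Matrix n n ℝ)) μ).mulVec v = μ • v := by
    ext x; simp [Matrix.algebraMap_eq_diagonal, Matrix.mulVec_diagonal]
  rw [Matrix.sub_mulVec, sub_eq_zero, this, eq_comm]

lemma sum_sq_expand {m : ℕ} (c : ℝ) (w : Fin m → ℝ) :
    ∑ j, (c - w j) ^ 2 = m * c^2 - 2*c*(∑ j, w j) + ∑ j, (w j)^2 := by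
  have : ∀ j, (c - w j)^2 = c^2 - 2*c*(w j) + (w j)^2 := fun j => by ring
  rw [Finset.sum_congr rfl fun j _ => this j, Finset.sum_add_distrib, Finset.sum_sub_distrib,
    ← Finset.mul_sum, Finset.sum_const, Finset.card_univ, Fintype.card_fin, nsmul_eq_mul]

lemma sum_mul_expand {m : ℕ} (c : ℝ) (w : Fin m → ℝ) :
    ∑ j, w j * (c - w j) = c * (∑ j, w j) - ∑ j, (w j)^2 := by
  have : ∀ j, w j * (c - w j) = c * w j - (w j)^2 := fun j => by ring
  rw [Finset.sum_congr rfl fun j _ => this j, Finset.sum_sub_distrib, ← Finset.mul_sum]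

lemma key_ineq (N q t : ℕ) (hN : 1 ≤ N) (hq : 1 ≤ q) (ht : 2 ≤ t)
    (x : Fin N → ℝ) (y : Fin q → Fin t → ℝ) :
    (∑ _l : Fin N, (∑ i, ∑ j, y i j)^2)
      + ∑ i, ∑ j, ((∑ l, x l) + ((∑ j', y i j') - y i j))^2
    ≤ ((t:ℝ)-1) * ((∑ l, x l * (∑ i, ∑ j, y i j))
        + ∑ i, ∑ j, y i j * ((∑ l, x l) + ((∑ j', y i j') - y i j)))
      + (N:ℝ)*q*t * ((∑ l, (x l)^2) + ∑ i, ∑ j, (y i j)^2) := by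
  set a := ∑ l, x l with ha
  -- rewrite inner sums
  have e2 : ∀ i : Fin q, ∑ j, (a + ((∑ j', y i j') - y i j))^2
      = t*(a + ∑ j', y i j')^2 - 2*(a + ∑ j', y i j')*(∑ j', y i j') + ∑ j, (y i j)^2 := by
    intro i
    have : ∀ j, (a + ((∑ j', y i j') - y i j)) = (a + ∑ j', y i j') - y i j := fun j => by ring
    rw [Finset.sum_congr rfl fun j _ => congrArg (· ^ 2) (this j), sum_sq_expand]
  have e3 : ∀ i : Fin q, ∑ j, y i j * (a + ((∑ j', y i j') - y i j))
      = (a + ∑ j', y i j') * (∑ j', y i j') - ∑ j, (y i j)^2 := by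
    intro i
    have : ∀ j, y i j * (a + ((∑ j', y i j') - y i j)) = y i j * ((a + ∑ j', y i j') - y i j) :=
      fun j => by ring
    rw [Finset.sum_congr rfl fun j _ => this j, sum_mul_expand]
  rw [Finset.sum_congr rfl fun i _ => e2 i, Finset.sum_congr rfl fun i _ => e3 i,
    ← Finset.sum_mul, Finset.sum_const, Finset.card_univ, Fintype.card_fin, nsmul_eq_mul]
  -- now expand the outer i-sums
  have E2 : ∑ i : Fin q, ((t:ℝ) * (a + ∑ j' : Fin t, y i j') ^ 2
        - 2 * (a + ∑ j' : Fin t, y i j') * (∑ j' : Fin t, y i j') + ∑ j : Fin t, y i j ^ 2)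
      = (q:ℝ)*((t:ℝ)*a^2) + (2*(t:ℝ)*a - 2*a) * (∑ i : Fin q, ∑ j : Fin t, y i j)
        + ((t:ℝ)-2) * (∑ i : Fin q, (∑ j : Fin t, y i j)^2) + ∑ i : Fin q, ∑ j : Fin t, y i j ^ 2 := by
    rw [Finset.sum_congr rfl (fun i _ => (by ring :
        (t:ℝ) * (a + ∑ j' : Fin t, y i j') ^ 2
          - 2 * (a + ∑ j' : Fin t, y i j') * (∑ j' : Fin t, y i j') + ∑ j : Fin t, y i j ^ 2
        = (t:ℝ)*a^2 + ((2*(t:ℝ)*a - 2*a) * (∑ j : Fin t, y i j)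
            + (((t:ℝ)-2) * (∑ j : Fin t, y i j)^2 + ∑ j : Fin t, y i j ^ 2))))]
    simp only [Finset.sum_add_distrib, ← Finset.mul_sum, Finset.sum_const, Finset.card_univ,
      Fintype.card_fin, nsmul_eq_mul]
    ring
  have E3 : ∑ i : Fin q, ((a + ∑ j' : Fin t, y i j') * (∑ j' : Fin t, y i j')
        - ∑ j : Fin t, y i j ^ 2)
      = a * (∑ i : Fin q, ∑ j : Fin t, y i j) + (∑ i : Fin q, (∑ j : Fin t, y i j)^2)
        - ∑ i : Fin q, ∑ j : Fin t, y i j ^ 2 := by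
    rw [Finset.sum_congr rfl (fun i _ => (by ring :
        (a + ∑ j' : Fin t, y i j') * (∑ j' : Fin t, y i j') - ∑ j : Fin t, y i j ^ 2
        = a * (∑ j : Fin t, y i j) + ((∑ j : Fin t, y i j)^2 - ∑ j : Fin t, y i j ^ 2)))]
    simp only [Finset.sum_add_distrib, Finset.sum_sub_distrib, ← Finset.mul_sum]
    ring
  rw [E2, E3]
  set b := ∑ i : Fin q, ∑ j : Fin t, y i j with hb
  set c := ∑ l, (x l)^2 with hc
  set d := ∑ i : Fin q, (∑ j : Fin t, y i j)^2 with hd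
  set e := ∑ i : Fin q, ∑ j : Fin t, (y i j)^2 with he
  have f1 : a^2 ≤ (N:ℝ) * c := by
    rw [ha, hc]
    have := sq_sum_le_card_mul_sum_sq (s := (univ : Finset (Fin N))) (f := x)
    simpa using this
  have f2 : b^2 ≤ (q:ℝ) * d := by
    rw [hb, hd]
    have := sq_sum_le_card_mul_sum_sq (s := (univ : Finset (Fin q)))
      (f := fun i => ∑ j : Fin t, y i j)
    simpa using this
  have f3 : d ≤ (t:ℝ) * e := by
    rw [hd, he, Finset.mul_sum]
    refine Finset.sum_le_sum fun i _ => ?_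
    have := sq_sum_le_card_mul_sum_sq (s := (univ : Finset (Fin t))) (f := y i)
    simpa using this
  have hN' : (1:ℝ) ≤ N := by exact_mod_cast hN
  have hq' : (1:ℝ) ≤ q := by exact_mod_cast hq
  have ht' : (2:ℝ) ≤ t := by exact_mod_cast ht
  nlinarith [mul_nonneg (mul_nonneg (by linarith : (0:ℝ) ≤ (q:ℝ)) (by linarith : (0:ℝ) ≤ (t:ℝ)))
      (by linarith : (0:ℝ) ≤ (N:ℝ)*c - a^2),
    mul_nonneg (by linarith : (0:ℝ) ≤ (N:ℝ)) (by linarith : (0:ℝ) ≤ (q:ℝ)*d - b^2),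
    mul_nonneg (by nlinarith : (0:ℝ) ≤ (N:ℝ)*(q:ℝ) - 1) (by linarith : (0:ℝ) ≤ (t:ℝ)*e - d)]

section
variable (s t q : ℕ)

abbrev JM (s t q : ℕ) : Matrix (Fin (s-1) ⊕ Fin q × Fin t) (Fin (s-1) ⊕ Fin q × Fin t) ℝ :=
  (graphJoin (⊥ : SimpleGraph (Fin (s - 1))) (cliquesUnion q t)).adjMatrix ℝ

theorem mv1 (v : Fin (s-1) ⊕ Fin q × Fin t → ℝ) (l : Fin (s-1)) :
    (JM s t q).mulVec v (Sum.inl l) = ∑ i : Fin q, ∑ j : Fin t, v (Sum.inr (i, j)) := by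
  simp [Matrix.mulVec, dotProduct, Fintype.sum_sum_type, Fintype.sum_prod_type,
    graphJoin, SimpleGraph.adjMatrix_apply]

theorem mv2 (v : Fin (s-1) ⊕ Fin q × Fin t → ℝ) (i : Fin q) (j : Fin t) :
    (JM s t q).mulVec v (Sum.inr (i, j)) =
      (∑ l, v (Sum.inl l)) + ((∑ j' : Fin t, v (Sum.inr (i, j'))) - v (Sum.inr (i, j))) := by
  simp only [Matrix.mulVec, dotProduct, Fintype.sum_sum_type, SimpleGraph.adjMatrix_apply]
  congr 1
  · simp [graphJoin]
  · have hpt : ∀ p : Fin q × Fin t,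
        (if (graphJoin (⊥ : SimpleGraph (Fin (s - 1))) (cliquesUnion q t)).Adj
            (Sum.inr (i,j)) (Sum.inr p) then (1:ℝ) else 0) * v (Sum.inr p)
        = (if p.1 = i then v (Sum.inr p) else 0) - (if p = (i,j) then v (Sum.inr p) else 0) := by
      rintro ⟨i', j'⟩
      by_cases h1 : i' = i <;> by_cases h2 : (i', j') = ((i, j) : Fin q × Fin t) <;>
        simp_all [graphJoin, cliquesUnion, eq_comm, Prod.ext_iff] <;> tauto
    rw [Finset.sum_congr rfl fun p _ => hpt p, Finset.sum_sub_distrib]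
    have h1 : ∀ i' : Fin q, (∑ j' : Fin t, if ((i', j') : Fin q × Fin t).1 = i
        then v (Sum.inr (i', j')) else 0) = if i' = i then ∑ j' : Fin t, v (Sum.inr (i', j')) else 0 := by
      intro i'; split <;> simp_all
    congr 1
    · rw [Fintype.sum_prod_type, Finset.sum_congr rfl fun i' _ => h1 i', Finset.sum_ite_eq' univ i]
      simp
    · rw [Finset.sum_ite_eq' univ ((i,j) : Fin q × Fin t) (fun p => v (Sum.inr p))]
      simp


theorem quad (s t q : ℕ) (hs : 2 ≤ s) (hq : 1 ≤ q) (ht : 2 ≤ t)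
    (v : Fin (s-1) ⊕ Fin q × Fin t → ℝ) :
    ∑ z, ((JM s t q).mulVec v z)^2
      ≤ ((t:ℝ)-1) * (∑ z, v z * (JM s t q).mulVec v z)
        + ((s-1:ℕ):ℝ)*q*t * ∑ z, (v z)^2 := by
  simp only [Fintype.sum_sum_type, Fintype.sum_prod_type, mv1, mv2]
  exact key_ineq (s-1) q t (by omega) hq ht (fun l => v (Sum.inl l))
    (fun i j => v (Sum.inr (i, j)))

theorem eig_quad (s t q : ℕ) (hs : 2 ≤ s) (hq : 1 ≤ q) (ht : 2 ≤ t) (μ : ℝ)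
    (hμ : μ ∈ spectrum ℝ (JM s t q)) :
    μ^2 ≤ ((t:ℝ)-1) * μ + ((s:ℝ)-1)*q*t := by
  obtain ⟨v, hv, heig⟩ := (mem_spec _ μ).mp hμ
  have hev : ∀ z, (JM s t q).mulVec v z = μ * v z := fun z => by
    rw [heig]; simp
  obtain ⟨z0, hz0⟩ := Function.ne_iff.mp hv
  have hV : 0 < ∑ z, (v z)^2 :=
    Finset.sum_pos' (fun z _ => sq_nonneg _) ⟨z0, Finset.mem_univ z0, by exact pow_pos (abs_pos.mpr hz0) 2 |>.trans_le (by rw [sq_abs])⟩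
  have h1 : ∑ z, ((JM s t q).mulVec v z)^2 = μ^2 * ∑ z, (v z)^2 := by
    rw [Finset.mul_sum]; exact Finset.sum_congr rfl fun z _ => by rw [hev]; ring
  have h2 : ∑ z, v z * (JM s t q).mulVec v z = μ * ∑ z, (v z)^2 := by
    rw [Finset.mul_sum]; exact Finset.sum_congr rfl fun z _ => by rw [hev]; ring
  have hcast : ((s-1:ℕ):ℝ) = (s:ℝ)-1 := by
    have : (1:ℕ) ≤ s := by omega
    push_cast [Nat.cast_sub this]; ring
  have := quad s t q hs hq ht v
  rw [h1, h2, hcast] at this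
  have h3 : μ^2 * (∑ z, (v z)^2) ≤ (((t:ℝ)-1) * μ + ((s:ℝ)-1)*q*t) * (∑ z, (v z)^2) := by
    rw [add_mul]; calc μ^2 * (∑ z, (v z)^2)
        ≤ ((t:ℝ)-1) * (μ * ∑ z, (v z)^2) + ((s:ℝ)-1)*q*t * ∑ z, (v z)^2 := this
      _ = ((t:ℝ)-1) * μ * (∑ z, (v z)^2) + ((s:ℝ)-1)*(q:ℝ)*(t:ℝ) * (∑ z, (v z)^2) := by ring
  exact le_of_mul_le_mul_right h3 hV

theorem eig_mem (s t q : ℕ) (hs : 2 ≤ s) (hq : 1 ≤ q) (ht : 2 ≤ t) (θ : ℝ) (hθ0 : θ ≠ 0)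
    (hθ : θ^2 = ((t:ℝ)-1) * θ + ((s:ℝ)-1)*q*t) :
    θ ∈ spectrum ℝ (JM s t q) := by
  rw [mem_spec]
  refine ⟨Sum.elim (fun _ => ((q:ℝ)*t)/θ) (fun _ => 1), ?_, ?_⟩
  · intro h
    have := congrFun h (Sum.inr (⟨0, by omega⟩, ⟨0, by omega⟩))
    simp at this
  · have hcast : ((s-1:ℕ):ℝ) = (s:ℝ)-1 := by
      have : (1:ℕ) ≤ s := by omega
      push_cast [Nat.cast_sub this]; ring
    funext z
    match z with
    | Sum.inl l =>
      rw [mv1]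
      simp only [Sum.elim_inr, Sum.elim_inl, Finset.sum_const, Finset.card_univ,
        Fintype.card_fin, nsmul_eq_mul, mul_one, Pi.smul_apply, smul_eq_mul]
      field_simp
    | Sum.inr p =>
      obtain ⟨i, j⟩ := p
      rw [mv2]
      simp only [Sum.elim_inr, Sum.elim_inl, Finset.sum_const, Finset.card_univ,
        Fintype.card_fin, nsmul_eq_mul, mul_one, Pi.smul_apply, smul_eq_mul, hcast]
      field_simp
      linarith [hθ]

end

/-- The largest and smallest adjacency eigenvalues of `(s-1)K_1 ∨ q K_t` are
`(t-1 ± √((t-1)² + 4(s-1)qt))/2`. -/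
theorem extreme_eigenvalues_join_cliques (s t q : ℕ) (hs : 2 ≤ s) (ht : 2 ≤ t) (hq : 1 ≤ q) :
    let A := (graphJoin (⊥ : SimpleGraph (Fin (s - 1))) (cliquesUnion q t)).adjMatrix ℝ
    sSup (spectrum ℝ A) =
      ((t : ℝ) - 1 + Real.sqrt (((t : ℝ) - 1) ^ 2 + 4 * ((s : ℝ) - 1) * (q : ℝ) * (t : ℝ))) / 2 ∧
    sInf (spectrum ℝ A) =
      ((t : ℝ) - 1 - Real.sqrt (((t : ℝ) - 1) ^ 2 + 4 * ((s : ℝ) - 1) * (q : ℝ) * (t : ℝ))) / 2 := by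
  intro A
  have hA : A = JM s t q := rfl
  set n : ℝ := (s:ℝ) - 1 with hn
  set D : ℝ := ((t:ℝ)-1)^2 + 4*n*q*t with hD
  have hn1 : (1:ℝ) ≤ n := by
    rw [hn]; have : (2:ℝ) ≤ s := by exact_mod_cast hs
    linarith
  have hq1 : (1:ℝ) ≤ q := by exact_mod_cast hq
  have ht2 : (2:ℝ) ≤ t := by exact_mod_cast ht
  have hnqt : (0:ℝ) < n*q*t :=
    mul_pos (mul_pos (by linarith) (by linarith)) (by linarith)
  have hD0 : 0 ≤ D := by rw [hD]; nlinarith [sq_nonneg ((t:ℝ)-1)]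
  set R : ℝ := Real.sqrt D with hR
  have hR0 : 0 ≤ R := Real.sqrt_nonneg _
  have hR2 : R^2 = D := Real.sq_sqrt hD0
  have hRgt : (t:ℝ) - 1 < R := by nlinarith [hR2, hR0, hnqt, hD]
  have hp : (((t:ℝ)-1+R)/2)^2 = ((t:ℝ)-1) * (((t:ℝ)-1+R)/2) + n*q*t := by
    rw [hD] at hR2; linear_combination hR2 / 4
  have hm : (((t:ℝ)-1-R)/2)^2 = ((t:ℝ)-1) * (((t:ℝ)-1-R)/2) + n*q*t := by
    rw [hD] at hR2; linear_combination hR2 / 4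
  have hp0 : ((t:ℝ)-1+R)/2 ≠ 0 := by
    have : 0 < ((t:ℝ)-1+R)/2 := by linarith
    exact ne_of_gt this
  have hm0 : ((t:ℝ)-1-R)/2 ≠ 0 := by
    have : ((t:ℝ)-1-R)/2 < 0 := by linarith
    exact ne_of_lt this
  have hR2' : R^2 = ((t:ℝ)-1)^2 + 4*n*q*t := by rw [hR2, hD]
  have memp : ((t:ℝ)-1+R)/2 ∈ spectrum ℝ (JM s t q) :=
    eig_mem s t q hs hq ht _ hp0 hp
  have memm : ((t:ℝ)-1-R)/2 ∈ spectrum ℝ (JM s t q) :=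
    eig_mem s t q hs hq ht _ hm0 hm
  have ub : ∀ μ ∈ spectrum ℝ (JM s t q), μ ≤ ((t:ℝ)-1+R)/2 := by
    intro μ hμ
    have hq2 := eig_quad s t q hs hq ht μ hμ
    nlinarith [hq2, hR2', hR0, sq_nonneg (2*μ - ((t:ℝ)-1) - R), sq_nonneg (2*μ - ((t:ℝ)-1) + R)]
  have lb : ∀ μ ∈ spectrum ℝ (JM s t q), ((t:ℝ)-1-R)/2 ≤ μ := by
    intro μ hμ
    have hq2 := eig_quad s t q hs hq ht μ hμ
    nlinarith [hq2, hR2', hR0, sq_nonneg (2*μ - ((t:ℝ)-1) - R), sq_nonneg (2*μ - ((t:ℝ)-1) + R)]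
  constructor
  · exact IsGreatest.csSup_eq ⟨memp, ub⟩
  · exact IsLeast.csInf_eq ⟨memm, lb⟩
end
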